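/- For k = 1 and any ρ, a minimum (1,ρ)-shortcut set can be computed in polynomial time: fix for each vertex u a ρ-closest neighbor set S^u_ρ breaking ties in favor of smaller hop distance, and add a shortcut from u to each v ∈ S^u_ρ with hopdist(u,v) > 1; this is both necessary and sufficient, and its cardinality equals the minimum over all (1,ρ)-shortcut sets. -/

import Mathlib

open scoped ENNReal Classical

/-- A walk from `u` is recorded as the list `p` of vertices visited after `u`;
it ends at `v` if the last vertex of `u :: p` is `v`. -/
def WalkEnds {V : Type*} (u : V) (p : List V) (v : V) : Prop := p.getLastD u = v

/-- A weighted (di)graph on vertex set `V`: weight `⊤` means "no edge". -/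
structure WGraph (V : Type*) where
  w : V → V → ℝ≥0∞

namespace WGraph

variable {V : Type*} (G : WGraph V)

/-- Total weight of the walk `u :: p`. -/
noncomputable def walkWeight : V → List V → ℝ≥0∞
  | _, [] => 0
  | u, v :: p => G.w u v + walkWeight v p

/-- Weight distance. -/
noncomputable def dist (u v : V) : ℝ≥0∞ :=
  sInf {c | ∃ p : List V, WalkEnds u p v ∧ G.walkWeight u p = c}

/-- Hop distance: the minimum number of edges among minimum-weight walks;
`⊤` if `v` is unreachable from `u`. -/
noncomputable def hopdist (u v : V) : ℕ∞ :=
  if G.dist u v = ⊤ then ⊤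
  else sInf {n : ℕ∞ | ∃ p : List V, WalkEnds u p v ∧
    G.walkWeight u p = G.dist u v ∧ (p.length : ℕ∞) = n}

/-- The set of vertices reachable from `u`, other than `u` itself. -/
def Reach (u : V) : Set V := {v | v ≠ u ∧ G.dist u v ≠ ⊤}

/-- `S` is a `ρ`-closest neighbor set of `u`. -/
def IsClosest (ρ : ℕ) (u : V) (S : Set V) : Prop :=
  S ⊆ G.Reach u ∧ S.ncard = min (G.Reach u).ncard ρ ∧
    ∀ v ∈ S, ∀ x ∈ G.Reach u \ S, G.dist u v ≤ G.dist u x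

/-- `u` has a `(k,ρ)`-ball: some `ρ`-closest neighbor set lies within hop distance `k`. -/
def HasBall (k ρ : ℕ) (u : V) : Prop :=
  ∃ S : Set V, G.IsClosest ρ u S ∧ ∀ v ∈ S, G.hopdist u v ≤ (k : ℕ∞)

/-- `G` is a `(k,ρ)`-graph. -/
def IsKRhoGraph (k ρ : ℕ) : Prop := ∀ u, G.HasBall k ρ u

/-- `G` is undirected (symmetric weights). -/
def Symm : Prop := ∀ u v, G.w u v = G.w v u

/-- All edge weights are strictly positive (trivial for non-edges of weight `⊤`). -/
def Positive : Prop := ∀ u v, 0 < G.w u v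

/-- `(u,v)` is a (potential) shortcut: `v` is reachable from `u` and the hop distance
exceeds `1`. -/
def IsShortcut (u v : V) : Prop := G.dist u v ≠ ⊤ ∧ 1 < G.hopdist u v

/-- Add each pair in `S` as a directed edge of weight `G.dist`. -/
noncomputable def addD (S : Set (V × V)) : WGraph V :=
  ⟨fun a b => G.w a b ⊓ sInf {c | (a, b) ∈ S ∧ c = G.dist a b}⟩

/-- Add each pair in `S` as an undirected edge of weight `G.dist`. -/
noncomputable def addU (S : Set (V × V)) : WGraph V :=
  ⟨fun a b => G.w a b ⊓ sInf {c | ((a, b) ∈ S ∨ (b, a) ∈ S) ∧ c = G.dist a b}⟩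

/-- `S` is a (directed) `(k,ρ)`-shortcut set for `G`. -/
def IsShortcutSetD (k ρ : ℕ) (S : Set (V × V)) : Prop :=
  (∀ p ∈ S, G.IsShortcut p.1 p.2) ∧ (G.addD S).IsKRhoGraph k ρ ∧
    ∀ x y, (G.addD S).dist x y = G.dist x y

/-- `S` is an (undirected) `(k,ρ)`-shortcut set for `G`. -/
def IsShortcutSetU (k ρ : ℕ) (S : Set (V × V)) : Prop :=
  (∀ p ∈ S, G.IsShortcut p.1 p.2) ∧ (G.addU S).IsKRhoGraph k ρ ∧
    ∀ x y, (G.addU S).dist x y = G.dist x y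


section Aux
variable {V : Type*}

lemma walkEnds_single (u v : V) : WalkEnds u [v] v := rfl

lemma walkEnds_nil (u : V) : WalkEnds u [] u := rfl

lemma getLastD_append (p q : List V) (u : V) :
    (p ++ q).getLastD u = q.getLastD (p.getLastD u) := by
  induction p generalizing u with
  | nil => rfl
  | cons a p ih => simp only [List.cons_append, List.getLastD_cons, ih]

lemma walkEnds_append {u v x : V} {p q : List V} (hp : WalkEnds u p v) (hq : WalkEnds v q x) :
    WalkEnds u (p ++ q) x := by
  unfold WalkEnds at *
  rw [getLastD_append, hp, hq]

lemma dist_le_walk (G : WGraph V) {u v : V} {p : List V} (h : WalkEnds u p v) :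
    G.dist u v ≤ G.walkWeight u p := sInf_le ⟨p, h, rfl⟩

lemma walkWeight_nil (G : WGraph V) (u : V) : G.walkWeight u [] = 0 := rfl

lemma walkWeight_cons (G : WGraph V) (u v : V) (p : List V) :
    G.walkWeight u (v :: p) = G.w u v + G.walkWeight v p := rfl

lemma dist_self (G : WGraph V) (u : V) : G.dist u u = 0 :=
  le_antisymm (by simpa [walkWeight_nil] using G.dist_le_walk (walkEnds_nil u)) zero_le

lemma dist_le_w (G : WGraph V) (u v : V) : G.dist u v ≤ G.w u v := by
  simpa [walkWeight_cons, walkWeight_nil] using G.dist_le_walk (walkEnds_single u v)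

lemma walkWeight_append (G : WGraph V) (u : V) (p q : List V) :
    G.walkWeight u (p ++ q) = G.walkWeight u p + G.walkWeight (p.getLastD u) q := by
  induction p generalizing u with
  | nil => simp [walkWeight_nil]
  | cons v p ih =>
    simp only [List.cons_append, walkWeight_cons, ih v, List.getLastD_cons, add_assoc]

lemma dist_eq_iInf (G : WGraph V) (u v : V) :
    G.dist u v = ⨅ p : {p : List V // WalkEnds u p v}, G.walkWeight u p.1 := by
  rw [WGraph.dist]
  have : {c | ∃ p : List V, WalkEnds u p v ∧ G.walkWeight u p = c} =
      Set.range fun p : {p : List V // WalkEnds u p v} => G.walkWeight u p.1 := by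
    ext c
    constructor
    · rintro ⟨p, hp, rfl⟩; exact ⟨⟨p, hp⟩, rfl⟩
    · rintro ⟨⟨p, hp⟩, rfl⟩; exact ⟨p, hp, rfl⟩
  rw [this, sInf_range]

lemma dist_triangle (G : WGraph V) (u v x : V) :
    G.dist u x ≤ G.dist u v + G.dist v x := by
  rw [dist_eq_iInf G u v, dist_eq_iInf G v x, ENNReal.iInf_add]
  refine le_iInf fun p => ?_
  rw [ENNReal.add_iInf]
  refine le_iInf fun q => ?_
  calc G.dist u x ≤ G.walkWeight u (p.1 ++ q.1) := G.dist_le_walk (walkEnds_append p.2 q.2)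
    _ = _ := by rw [walkWeight_append, show p.1.getLastD u = v from p.2]

lemma dist_le_walkWeight_of_le {G G' : WGraph V} (h : ∀ a b, G.dist a b ≤ G'.w a b)
    (p : List V) (u : V) : G.dist u (p.getLastD u) ≤ G'.walkWeight u p := by
  induction p generalizing u with
  | nil => simp [dist_self, walkWeight_nil]
  | cons v p ih =>
    calc G.dist u ((v :: p).getLastD u) ≤ G.dist u v + G.dist v (p.getLastD v) := by
          rw [List.getLastD_cons]; exact G.dist_triangle u v _
      _ ≤ G'.w u v + G'.walkWeight v p := add_le_add (h u v) (ih v)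
      _ = G'.walkWeight u (v :: p) := (walkWeight_cons G' u v p).symm

lemma walkWeight_mono {G G' : WGraph V} (h : ∀ a b, G'.w a b ≤ G.w a b) (u : V) (p : List V) :
    G'.walkWeight u p ≤ G.walkWeight u p := by
  induction p generalizing u with
  | nil => simp [walkWeight_nil]
  | cons v p ih => rw [walkWeight_cons, walkWeight_cons]; exact add_le_add (h u v) (ih v)

lemma dist_le_addD_w (G : WGraph V) (S : Set (V × V)) (a b : V) :
    G.dist a b ≤ (G.addD S).w a b :=
  le_inf (G.dist_le_w a b) (le_sInf fun c hc => hc.2.ge)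

lemma addD_w_le (G : WGraph V) (S : Set (V × V)) (a b : V) :
    (G.addD S).w a b ≤ G.w a b := inf_le_left

lemma dist_addD (G : WGraph V) (S : Set (V × V)) :
    ∀ x y, (G.addD S).dist x y = G.dist x y := by
  intro x y
  refine le_antisymm ?_ ?_
  · refine le_sInf ?_
    rintro c ⟨p, hp, rfl⟩
    exact ((G.addD S).dist_le_walk hp).trans (walkWeight_mono (G.addD_w_le S) x p)
  · refine le_sInf ?_
    rintro c ⟨p, hp, rfl⟩
    have := dist_le_walkWeight_of_le (G' := G.addD S) (G.dist_le_addD_w S) p x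
    rwa [show p.getLastD x = y from hp] at this

lemma isClosest_congr {G G' : WGraph V} (h : ∀ x y, G'.dist x y = G.dist x y)
    (ρ : ℕ) (u : V) (S : Set V) : G'.IsClosest ρ u S ↔ G.IsClosest ρ u S := by
  have hr : ∀ u, G'.Reach u = G.Reach u := by
    intro u; ext v; simp [WGraph.Reach, h]
  unfold WGraph.IsClosest
  rw [hr]
  simp only [h]

lemma hopdist_le_one {G' : WGraph V} {u v : V} (hne : G'.dist u v ≠ ⊤)
    (hw : G'.w u v = G'.dist u v) : G'.hopdist u v ≤ 1 := by
  rw [WGraph.hopdist, if_neg hne]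
  exact sInf_le ⟨[v], walkEnds_single u v, by simp [walkWeight_cons, walkWeight_nil, hw], by simp⟩

lemma weight_eq_of_hop_le_one {G : WGraph V} {u v : V} (hvu : v ≠ u) (hne : G.dist u v ≠ ⊤)
    (hh : G.hopdist u v ≤ 1) : G.w u v = G.dist u v := by
  rw [WGraph.hopdist, if_neg hne] at hh
  have hex : ∃ n ∈ {n : ℕ∞ | ∃ p : List V, WalkEnds u p v ∧
      G.walkWeight u p = G.dist u v ∧ (p.length : ℕ∞) = n}, n ≤ 1 := by
    by_contra hcon
    push_neg at hcon
    have h2 : (2 : ℕ∞) ≤ sInf {n : ℕ∞ | ∃ p : List V, WalkEnds u p v ∧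
        G.walkWeight u p = G.dist u v ∧ (p.length : ℕ∞) = n} := by
      refine le_sInf fun n hn => ?_
      have := hcon n hn
      cases n with
      | top => exact le_top
      | coe m => exact_mod_cast by exact_mod_cast Nat.succ_le_of_lt (by exact_mod_cast this)
    have := h2.trans hh
    norm_num at this
  obtain ⟨n, ⟨p, hends, hww, hlen⟩, hn1⟩ := hex
  match p with
  | [] => exact absurd (show u = v from hends).symm hvu
  | [x] =>
    have hx : x = v := hends
    subst hx
    simpa [walkWeight_cons, walkWeight_nil] using hww
  | x :: y :: q =>
    rw [← hlen] at hn1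
    exfalso
    have h' : (q.length + 1 + 1 : ℕ) ≤ 1 := by exact_mod_cast hn1
    omega

lemma mem_of_hop {G : WGraph V} {S' : Set (V × V)}
    (hdist : ∀ x y, (G.addD S').dist x y = G.dist x y)
    {u v : V} (hv : v ∈ G.Reach u) (hhop : 1 < G.hopdist u v)
    (hhop' : (G.addD S').hopdist u v ≤ 1) : (u, v) ∈ S' := by
  by_contra h
  have hw : (G.addD S').w u v = G.w u v := by
    show G.w u v ⊓ sInf {c | (u, v) ∈ S' ∧ c = G.dist u v} = G.w u v
    have he : {c | (u, v) ∈ S' ∧ c = G.dist u v} = ∅ := by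
      ext c; simp [h]
    rw [he, sInf_empty, inf_top_eq]
  have h1 : (G.addD S').w u v = (G.addD S').dist u v :=
    weight_eq_of_hop_le_one hv.1 (by rw [hdist]; exact hv.2) hhop'
  have h2 : G.w u v = G.dist u v := by rw [← hw, h1, hdist]
  exact absurd (hopdist_le_one (G' := G) hv.2 h2) (not_le.mpr hhop)

lemma closest_count {G : WGraph V} [Finite V] {ρ : ℕ} {u : V} {C D : Set V}
    (hC : G.IsClosest ρ u C) (hD : G.IsClosest ρ u D)
    (htie : ∀ v ∈ C, ∀ x ∈ G.Reach u \ C,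
      G.dist u v = G.dist u x → G.hopdist u v ≤ G.hopdist u x) :
    {v ∈ C | 1 < G.hopdist u v}.ncard ≤ {v ∈ D | 1 < G.hopdist u v}.ncard := by
  have hcard : C.ncard = D.ncard := by rw [hC.2.1, hD.2.1]
  -- key: {v ∈ D | hop ≤ 1}.ncard ≤ {v ∈ C | hop ≤ 1}.ncard
  have key : {v ∈ D | G.hopdist u v ≤ 1}.ncard ≤ {v ∈ C | G.hopdist u v ≤ 1}.ncard := by
    by_cases hE : ∃ x ∈ D \ C, G.hopdist u x ≤ 1
    · obtain ⟨x, hx, hQx⟩ := hE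
      have hall : ∀ v ∈ C \ D, G.hopdist u v ≤ 1 := by
        intro v hv
        have hxR : x ∈ G.Reach u \ C := ⟨hD.1 hx.1, hx.2⟩
        have h1 : G.dist u v ≤ G.dist u x := hC.2.2 v hv.1 x hxR
        have h2 : G.dist u x ≤ G.dist u v := hD.2.2 x hx.1 v ⟨hC.1 hv.1, hv.2⟩
        exact le_trans (htie v hv.1 x hxR (le_antisymm h1 h2)) hQx
      have hDsplit : {v ∈ D | G.hopdist u v ≤ 1} =
          {v ∈ D ∩ C | G.hopdist u v ≤ 1} ∪ {v ∈ D \ C | G.hopdist u v ≤ 1} := by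
        ext v
        constructor
        · rintro ⟨hvD, hQ⟩
          by_cases hvC : v ∈ C
          · exact Or.inl ⟨⟨hvD, hvC⟩, hQ⟩
          · exact Or.inr ⟨⟨hvD, hvC⟩, hQ⟩
        · rintro (⟨⟨h, _⟩, hQ⟩ | ⟨⟨h, _⟩, hQ⟩) <;> exact ⟨h, hQ⟩
      have hCsplit : {v ∈ C | G.hopdist u v ≤ 1} =
          {v ∈ C ∩ D | G.hopdist u v ≤ 1} ∪ (C \ D) := by
        ext v
        constructor
        · rintro ⟨hvC, hQ⟩
          by_cases hvD : v ∈ D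
          · exact Or.inl ⟨⟨hvC, hvD⟩, hQ⟩
          · exact Or.inr ⟨hvC, hvD⟩
        · rintro (⟨⟨h, _⟩, hQ⟩ | hCD)
          · exact ⟨h, hQ⟩
          · exact ⟨hCD.1, hall v hCD⟩
      have hdisj1 : Disjoint {v ∈ D ∩ C | G.hopdist u v ≤ 1} {v ∈ D \ C | G.hopdist u v ≤ 1} := by
        refine Set.disjoint_left.mpr fun v hv1 hv2 => hv2.1.2 hv1.1.2
      have hdisj2 : Disjoint {v ∈ C ∩ D | G.hopdist u v ≤ 1} (C \ D) := by
        refine Set.disjoint_left.mpr fun v hv1 hv2 => hv2.2 hv1.1.2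
      rw [hDsplit, hCsplit, Set.ncard_union_eq hdisj1, Set.ncard_union_eq hdisj2]
      have e1 : {v ∈ D ∩ C | G.hopdist u v ≤ 1} = {v ∈ C ∩ D | G.hopdist u v ≤ 1} := by
        rw [Set.inter_comm]
      rw [e1]
      have e2 : {v ∈ D \ C | G.hopdist u v ≤ 1}.ncard ≤ (D \ C).ncard :=
        Set.ncard_le_ncard (fun v hv => hv.1) (Set.toFinite _)
      have e3 : (D \ C).ncard = (C \ D).ncard := by
        have h1 := Set.ncard_inter_add_ncard_diff_eq_ncard D C
        have h2 := Set.ncard_inter_add_ncard_diff_eq_ncard C D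
        rw [Set.inter_comm] at h1
        omega
      omega
    · push_neg at hE
      refine Set.ncard_le_ncard ?_ (Set.toFinite _)
      intro v hv
      by_cases hvC : v ∈ C
      · exact ⟨hvC, hv.2⟩
      · exact absurd (hE v ⟨hv.1, hvC⟩) (not_lt.mpr hv.2)
  -- partition counts
  have hCpart : {v ∈ C | G.hopdist u v ≤ 1}.ncard + {v ∈ C | 1 < G.hopdist u v}.ncard
      = C.ncard := by
    rw [← Set.ncard_union_eq (by
      refine Set.disjoint_left.mpr fun v hv1 hv2 => absurd hv1.2 (not_le.mpr hv2.2))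
      (Set.toFinite _) (Set.toFinite _)]
    congr 1
    ext v
    simp only [Set.mem_union, Set.mem_setOf_eq]
    constructor
    · rintro (h | h) <;> exact h.1
    · intro hv
      rcases le_or_gt (G.hopdist u v) 1 with h | h
      · exact Or.inl ⟨hv, h⟩
      · exact Or.inr ⟨hv, h⟩
  have hDpart : {v ∈ D | G.hopdist u v ≤ 1}.ncard + {v ∈ D | 1 < G.hopdist u v}.ncard
      = D.ncard := by
    rw [← Set.ncard_union_eq (by
      refine Set.disjoint_left.mpr fun v hv1 hv2 => absurd hv1.2 (not_le.mpr hv2.2))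
      (Set.toFinite _) (Set.toFinite _)]
    congr 1
    ext v
    simp only [Set.mem_union, Set.mem_setOf_eq]
    constructor
    · rintro (h | h) <;> exact h.1
    · intro hv
      rcases le_or_gt (G.hopdist u v) 1 with h | h
      · exact Or.inl ⟨hv, h⟩
      · exact Or.inr ⟨hv, h⟩
  omega

end Aux

end WGraph

/-- for `k = 1` and any `ρ`, the greedy construction is optimal: fix for
each vertex `u` a `ρ`-closest neighbor set `Sc u` breaking ties in favor of smaller
hop distance, and add a shortcut `(u,v)` for each `v ∈ Sc u` with `hopdist(u,v) > 1`;
the resulting set is a `(1,ρ)`-shortcut set of minimum cardinality. -/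
theorem stmt15 {V : Type*} [Finite V] (G : WGraph V) (hpos : G.Positive) (ρ : ℕ)
    (Sc : V → Set V) (hSc : ∀ u, G.IsClosest ρ u (Sc u))
    (htie : ∀ u, ∀ v ∈ Sc u, ∀ x ∈ G.Reach u \ Sc u,
      G.dist u v = G.dist u x → G.hopdist u v ≤ G.hopdist u x) :
    G.IsShortcutSetD 1 ρ {p : V × V | p.2 ∈ Sc p.1 ∧ 1 < G.hopdist p.1 p.2} ∧
      ∀ S' : Set (V × V), G.IsShortcutSetD 1 ρ S' →
        {p : V × V | p.2 ∈ Sc p.1 ∧ 1 < G.hopdist p.1 p.2}.ncard ≤ S'.ncard := by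
  classical
  set T : Set (V × V) := {p : V × V | p.2 ∈ Sc p.1 ∧ 1 < G.hopdist p.1 p.2} with hT
  have hdT := G.dist_addD T
  -- weight of added edges equals distance for v ∈ Sc u
  have hwT : ∀ u, ∀ v ∈ Sc u, (G.addD T).w u v = G.dist u v := by
    intro u v hv
    refine le_antisymm ?_ (G.dist_le_addD_w T u v)
    by_cases hh : 1 < G.hopdist u v
    · have hmem : (u, v) ∈ T := ⟨hv, hh⟩
      calc (G.addD T).w u v ≤ sInf {c | (u, v) ∈ T ∧ c = G.dist u v} := inf_le_right
        _ ≤ G.dist u v := sInf_le ⟨hmem, rfl⟩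
    · have hreach := (hSc u).1 hv
      have := WGraph.weight_eq_of_hop_le_one hreach.1 hreach.2 (not_lt.mp hh)
      calc (G.addD T).w u v ≤ G.w u v := inf_le_left
        _ = G.dist u v := this
  constructor
  · refine ⟨fun p hp => ⟨((hSc p.1).1 hp.1).2, hp.2⟩, ?_, hdT⟩
    intro u
    refine ⟨Sc u, (WGraph.isClosest_congr hdT ρ u (Sc u)).mpr (hSc u), ?_⟩
    intro v hv
    have hreach := (hSc u).1 hv
    have h1 : (G.addD T).hopdist u v ≤ 1 :=
      WGraph.hopdist_le_one (by rw [hdT]; exact hreach.2) (by rw [hwT u v hv, hdT])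
    exact h1.trans (by norm_num)
  · intro S' hS'
    haveI := Fintype.ofFinite V
    obtain ⟨_, hKR, hdist⟩ := hS'
    choose B hBclosest hBhop using hKR
    have hBc : ∀ u, G.IsClosest ρ u (B u) := fun u =>
      (WGraph.isClosest_congr hdist ρ u (B u)).mp (hBclosest u)
    have hStepA : ∀ u v, v ∈ B u → 1 < G.hopdist u v → (u, v) ∈ S' := by
      intro u v hv hh
      refine WGraph.mem_of_hop hdist ((hBc u).1 hv) hh ?_
      have := hBhop u v hv
      simpa using this
    have hcount : ∀ u, {v | v ∈ Sc u ∧ 1 < G.hopdist u v}.ncard ≤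
        {v | v ∈ B u ∧ 1 < G.hopdist u v}.ncard := fun u =>
      WGraph.closest_count (hSc u) (hBc u) (htie u)
    -- choose injections fiberwise
    have hemb : ∀ u, ∃ f : V → V,
        Set.InjOn f {v | v ∈ Sc u ∧ 1 < G.hopdist u v} ∧
        ∀ v ∈ {v | v ∈ Sc u ∧ 1 < G.hopdist u v}, f v ∈ {v | v ∈ B u ∧ 1 < G.hopdist u v} := by
      intro u
      set s := {v | v ∈ Sc u ∧ 1 < G.hopdist u v}
      set t := {v | v ∈ B u ∧ 1 < G.hopdist u v}
      have hcard : Fintype.card s ≤ Fintype.card t := by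
        rw [← Nat.card_eq_fintype_card, ← Nat.card_eq_fintype_card,
          Nat.card_coe_set_eq, Nat.card_coe_set_eq]
        exact hcount u
      obtain ⟨e⟩ := Function.Embedding.nonempty_of_card_le hcard
      refine ⟨fun v => if h : v ∈ s then (e ⟨v, h⟩ : V) else v, ?_, ?_⟩
      · intro a ha b hb hab
        simp only [dif_pos ha, dif_pos hb] at hab
        have := e.injective (Subtype.ext hab)
        exact congrArg Subtype.val this
      · intro v hv
        simp only [dif_pos hv]
        exact (e ⟨v, hv⟩).2
    choose f hfinj hfmem using hemb
    have hmaps : ∀ p ∈ T, (p.1, f p.1 p.2) ∈ S' := by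
      rintro ⟨a, b⟩ hp
      have := hfmem a b hp
      exact hStepA a (f a b) this.1 this.2
    have hinj : Set.InjOn (fun p : V × V => (p.1, f p.1 p.2)) T := by
      rintro ⟨a, b⟩ hab ⟨c, d⟩ hcd h
      simp only [Prod.mk.injEq] at h
      obtain ⟨h1, h2⟩ := h
      subst h1
      have : b = d := hfinj a hab hcd h2
      simp [this]
    exact Set.ncard_le_ncard_of_injOn _ hmaps hinj (Set.toFinite S')
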